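/- Let x : ℝ → ℝ³ be C² with x' compactly supported and |x'(t)| ≤ v₀ < 1 for all t, and define J(p) = ∫_ℝ x'(t) e^{iψ(p,t)} dt. Then there is a constant C such that |J(p)| ≤ C/|p| for all p with |p| ≥ 1. -/

import Mathlib

open MeasureTheory Complex

noncomputable section

abbrev E3 := EuclideanSpace ℝ (Fin 3)
abbrev C3 := EuclideanSpace ℂ (Fin 3)

/-- The inclusion `ℝ³ → ℂ³`. -/
def cmap (v : E3) : C3 := WithLp.toLp 2 (fun i => (v i : ℂ))

/-- The phase `ψ(p,t) = |p| t − p·x(t)`. -/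
def psi (x : ℝ → E3) (p : E3) (t : ℝ) : ℝ := ‖p‖ * t - (inner ℝ p (x t) : ℝ)

/-- The radiation amplitude `J(p) = ∫ x'(t) e^{iψ(p,t)} dt`. -/
def Jrad (x : ℝ → E3) (p : E3) : C3 :=
  ∫ t : ℝ, Complex.exp (Complex.I * (psi x p t : ℂ)) • cmap (deriv x t)

/-- `cmap` as a continuous linear map. -/
def cmapL : E3 →L[ℝ] C3 :=
  LinearMap.mkContinuous
    { toFun := cmap
      map_add' := by intro u v; ext i; simp [cmap]
      map_smul' := by intro c v; ext i; simp [cmap] }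
    1 (by
      intro v
      rw [one_mul]
      apply le_of_eq
      show ‖cmap v‖ = ‖v‖
      rw [EuclideanSpace.norm_eq, EuclideanSpace.norm_eq]
      simp [cmap, Complex.norm_real, Real.norm_eq_abs, sq_abs])

lemma norm_cmapL (v : E3) : ‖cmapL v‖ = ‖v‖ := by
  show ‖cmap v‖ = ‖v‖
  rw [EuclideanSpace.norm_eq, EuclideanSpace.norm_eq]
  simp [cmap, Complex.norm_real, Real.norm_eq_abs, sq_abs]

set_option maxHeartbeats 1000000 in
/-- for a `C²` trajectory with compactly supported velocity bounded by
`v₀ < 1`, one has `|J(p)| ≤ C/|p|` for `|p| ≥ 1`. -/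
theorem Jrad_decay_one
    (x : ℝ → E3) (hx : ContDiff ℝ 2 x) (hsupp : HasCompactSupport (deriv x))
    (v₀ : ℝ) (hv₀ : v₀ < 1) (hbd : ∀ t, ‖deriv x t‖ ≤ v₀) :
    ∃ C : ℝ, ∀ p : E3, 1 ≤ ‖p‖ → ‖Jrad x p‖ ≤ C / ‖p‖ := by
  have hx2 : ContDiff ℝ (1 + 1) x := by
    exact_mod_cast hx
  have hx1 : ContDiff ℝ 1 (deriv x) := (contDiff_succ_iff_deriv.mp hx2).2.2
  set a := deriv x with ha
  set b := deriv a with hb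
  have hda : Differentiable ℝ a := hx1.differentiable one_ne_zero
  have hbc : Continuous b := hx1.continuous_deriv le_rfl
  have hac : Continuous a := hx1.continuous
  have hsb : HasCompactSupport b := hsupp.deriv
  have hdx : Differentiable ℝ x := hx.differentiable (by norm_num)
  have hxd : ∀ t, HasDerivAt x (a t) t := fun t => (hdx t).hasDerivAt
  have hab : ∀ t, HasDerivAt a (b t) t := fun t => (hda t).hasDerivAt
  have hv0 : 0 ≤ v₀ := le_trans (norm_nonneg _) (hbd 0)
  have h1v : 0 < 1 - v₀ := by linarith
  have intb : Integrable b := hbc.integrable_of_hasCompactSupport hsb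
  set K := v₀ / (1 - v₀) ^ 2 + 1 / (1 - v₀) with hK
  refine ⟨K * ∫ t, ‖b t‖, fun p hp => ?_⟩
  have hppos : (0 : ℝ) < ‖p‖ := lt_of_lt_of_le one_pos hp
  set φ : ℝ → ℝ := fun t => ‖p‖ - (inner ℝ p (a t) : ℝ) with hφ
  have hφlb : ∀ t, ‖p‖ * (1 - v₀) ≤ φ t := by
    intro t
    have h1 : (inner ℝ p (a t) : ℝ) ≤ ‖p‖ * ‖a t‖ := real_inner_le_norm p (a t)
    have h2 : ‖p‖ * ‖a t‖ ≤ ‖p‖ * v₀ := by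
      gcongr
      exact hbd t
    simp only [hφ]
    nlinarith
  have hφpos : ∀ t, 0 < φ t := fun t => lt_of_lt_of_le (by positivity) (hφlb t)
  have hφne : ∀ t, (Complex.I * (φ t : ℂ)) ≠ 0 := fun t =>
    mul_ne_zero Complex.I_ne_zero (by exact_mod_cast (hφpos t).ne')
  have hφd : ∀ t, HasDerivAt φ (-(inner ℝ p (b t) : ℝ)) t := by
    intro t
    have h2 : HasDerivAt (fun t => (inner ℝ p (a t) : ℝ)) ((inner ℝ p (b t) : ℝ)) t := by
      have := (innerSL ℝ p).hasFDerivAt.comp_hasDerivAt t (hab t)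
      simpa [innerSL_apply_apply, Function.comp_def] using this
    simpa using h2.const_sub ‖p‖
  have hψd : ∀ t, HasDerivAt (psi x p) (φ t) t := by
    intro t
    have h1 : HasDerivAt (fun t : ℝ => ‖p‖ * t) ‖p‖ t := by
      simpa using (hasDerivAt_id t).const_mul ‖p‖
    have h2 : HasDerivAt (fun t => (inner ℝ p (x t) : ℝ)) ((inner ℝ p (a t) : ℝ)) t := by
      have := (innerSL ℝ p).hasFDerivAt.comp_hasDerivAt t (hxd t)
      simpa [innerSL_apply_apply, Function.comp_def] using this
    have := h1.sub h2
    exact this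
  set g : ℝ → ℂ := fun t => Complex.exp (Complex.I * (psi x p t : ℂ)) with hg
  have hgd : ∀ t, HasDerivAt g (Complex.I * (φ t : ℂ) * g t) t := by
    intro t
    have h1 : HasDerivAt (fun t => ((psi x p t : ℝ) : ℂ)) ((φ t : ℂ)) t := (hψd t).ofReal_comp
    have h2 := (h1.const_mul Complex.I).cexp
    simpa [hg, mul_comm] using h2
  set c : ℝ → ℂ := fun t => (Complex.I * (φ t : ℂ))⁻¹ with hc
  set c' : ℝ → ℂ := fun t =>
    -(Complex.I * ((-(inner ℝ p (b t) : ℝ) : ℝ) : ℂ)) / (Complex.I * (φ t : ℂ)) ^ 2 with hc'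
  have hcd : ∀ t, HasDerivAt c (c' t) t := by
    intro t
    have h1 : HasDerivAt (fun t => Complex.I * (φ t : ℂ))
        (Complex.I * ((-(inner ℝ p (b t) : ℝ) : ℝ) : ℂ)) t :=
      ((hφd t).ofReal_comp).const_mul Complex.I
    have h2 := (hasDerivAt_inv (hφne t)).comp t h1
    have h3 : HasDerivAt c
        (-((Complex.I * (φ t : ℂ)) ^ 2)⁻¹ *
          (Complex.I * ((-(inner ℝ p (b t) : ℝ) : ℝ) : ℂ))) t := h2
    convert h3 using 1
    show -(Complex.I * ((-(inner ℝ p (b t) : ℝ) : ℝ) : ℂ)) / (Complex.I * (φ t : ℂ)) ^ 2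
        = -((Complex.I * (φ t : ℂ)) ^ 2)⁻¹ *
          (Complex.I * ((-(inner ℝ p (b t) : ℝ) : ℝ) : ℂ))
    ring
  have hwd : ∀ t, HasDerivAt (fun t => cmapL (a t)) (cmapL (b t)) t := fun t =>
    cmapL.hasFDerivAt.comp_hasDerivAt t (hab t)
  set h' : ℝ → C3 := fun t => c' t • cmapL (a t) + c t • cmapL (b t) with hh'
  set F : ℝ → C3 := fun t => g t • (c t • cmapL (a t)) with hF
  have hFd : ∀ t, HasDerivAt F (g t • cmapL (a t) + g t • h' t) t := by
    intro t
    have h1 : HasDerivAt (fun t => c t • cmapL (a t)) (h' t) t := by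
      have := (hcd t).smul (hwd t)
      rw [add_comm] at this
      exact this
    have h2 := (hgd t).smul h1
    have hsc : Complex.I * (φ t : ℂ) * g t * c t = g t := by
      show Complex.I * (φ t : ℂ) * g t * (Complex.I * (φ t : ℂ))⁻¹ = g t
      rw [mul_comm (Complex.I * (φ t : ℂ)) (g t), mul_assoc,
        mul_inv_cancel₀ (hφne t), mul_one]
    rw [smul_smul, hsc, add_comm] at h2
    exact h2
  -- continuity
  have hψc : Continuous (psi x p) := by
    have : Continuous fun t => (inner ℝ p (x t) : ℝ) := continuous_const.inner hx.continuous
    exact (continuous_const.mul continuous_id).sub this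
  have hgc : Continuous g :=
    (continuous_const.mul (Complex.continuous_ofReal.comp hψc)).cexp
  have hφcont : Continuous φ := continuous_const.sub (continuous_const.inner hac)
  have hccont : Continuous c :=
    (continuous_const.mul (Complex.continuous_ofReal.comp hφcont)).inv₀ hφne
  have hc'cont : Continuous c' := by
    apply Continuous.div
    · exact (continuous_const.mul
        (Complex.continuous_ofReal.comp (continuous_const.inner hbc).neg)).neg
    · exact (continuous_const.mul (Complex.continuous_ofReal.comp hφcont)).pow 2
    · intro t; exact pow_ne_zero 2 (hφne t)
  have hh'c : Continuous h' :=
    (hc'cont.smul (cmapL.continuous.comp hac)).add (hccont.smul (cmapL.continuous.comp hbc))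
  -- compact support
  have hsa : HasCompactSupport (fun t => cmapL (a t)) := hsupp.comp_left (map_zero cmapL)
  have hsbc : HasCompactSupport (fun t => cmapL (b t)) := hsb.comp_left (map_zero cmapL)
  have hca : HasCompactSupport (fun t => c t • cmapL (a t)) := hsa.smul_left (f := c)
  have hFsupp : HasCompactSupport F := hca.smul_left (f := g)
  have hh'supp : HasCompactSupport h' := (hsa.smul_left (f := c')).add (hsbc.smul_left (f := c))
  have hF'supp : HasCompactSupport (fun t => g t • cmapL (a t) + g t • h' t) :=
    (hsa.smul_left (f := g)).add (hh'supp.smul_left (f := g))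
  -- integrability
  have hF'c : Continuous (fun t => g t • cmapL (a t) + g t • h' t) :=
    (hgc.smul (cmapL.continuous.comp hac)).add (hgc.smul hh'c)
  have hF'int : Integrable (fun t => g t • cmapL (a t) + g t • h' t) :=
    hF'c.integrable_of_hasCompactSupport hF'supp
  have hgh'int : Integrable (fun t => g t • h' t) :=
    (hgc.smul hh'c).integrable_of_hasCompactSupport (hh'supp.smul_left (f := g))
  -- F is continuous, tends to 0 at ±∞
  have hFc : Continuous F :=
    continuous_iff_continuousAt.mpr fun t => (hFd t).continuousAt
  have hFtop : Filter.Tendsto F Filter.atTop (nhds 0) := by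
    have h2f := hFsupp
    rw [hasCompactSupport_iff_eventuallyEq, Filter.coclosedCompact_eq_cocompact] at h2f
    exact (h2f.filter_mono _root_.atTop_le_cocompact).tendsto
  have hFbot : Filter.Tendsto F Filter.atBot (nhds 0) := by
    have h2f := hFsupp
    rw [hasCompactSupport_iff_eventuallyEq, Filter.coclosedCompact_eq_cocompact] at h2f
    exact (h2f.filter_mono _root_.atBot_le_cocompact).tendsto
  -- integral of the derivative vanishes
  have hIoi : ∫ t in Set.Ioi (0 : ℝ), (g t • cmapL (a t) + g t • h' t) = 0 - F 0 :=
    integral_Ioi_of_hasDerivAt_of_tendsto hFc.continuousWithinAt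
      (fun t _ => hFd t) hF'int.integrableOn hFtop
  have hIic : ∫ t in Set.Iic (0 : ℝ), (g t • cmapL (a t) + g t • h' t) = F 0 - 0 :=
    integral_Iic_of_hasDerivAt_of_tendsto hFc.continuousWithinAt
      (fun t _ => hFd t) hF'int.integrableOn hFbot
  have hF'zero : ∫ t, (g t • cmapL (a t) + g t • h' t) = 0 := by
    rw [← intervalIntegral.integral_Iic_add_Ioi (b := (0:ℝ)) hF'int.integrableOn hF'int.integrableOn,
      hIoi, hIic]
    simp
  have hJ : Jrad x p = - ∫ t, g t • h' t := by
    have h0 : Jrad x p = ∫ t, g t • cmapL (a t) := rfl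
    rw [h0]
    calc ∫ t, g t • cmapL (a t)
        = ∫ t, ((g t • cmapL (a t) + g t • h' t) - g t • h' t) := by
          congr 1; funext t; abel
      _ = (∫ t, (g t • cmapL (a t) + g t • h' t)) - ∫ t, g t • h' t :=
          integral_sub hF'int hgh'int
      _ = - ∫ t, g t • h' t := by rw [hF'zero]; abel
  rw [hJ, norm_neg]
  have hbound : ∀ t, ‖g t • h' t‖ ≤ K / ‖p‖ * ‖b t‖ := by
    intro t
    have hgn : ‖g t‖ = 1 := by
      simp [hg, Complex.norm_exp]
    rw [norm_smul, hgn, one_mul]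
    have hcn : ‖c t‖ = (φ t)⁻¹ := by
      show ‖(Complex.I * (φ t : ℂ))⁻¹‖ = (φ t)⁻¹
      rw [norm_inv, norm_mul, Complex.norm_I, one_mul, Complex.norm_real,
        Real.norm_eq_abs, abs_of_pos (hφpos t)]
    have hc'n : ‖c' t‖ = |(inner ℝ p (b t) : ℝ)| / (φ t) ^ 2 := by
      show ‖-(Complex.I * ((-(inner ℝ p (b t) : ℝ) : ℝ) : ℂ)) / (Complex.I * (φ t : ℂ)) ^ 2‖
          = |(inner ℝ p (b t) : ℝ)| / (φ t) ^ 2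
      rw [norm_div, norm_neg, norm_mul, Complex.norm_I, one_mul, Complex.norm_real,
        Real.norm_eq_abs, abs_neg, norm_pow, norm_mul, Complex.norm_I, one_mul,
        Complex.norm_real, Real.norm_eq_abs, abs_of_pos (hφpos t)]
    have step1 : ‖h' t‖ ≤ |(inner ℝ p (b t) : ℝ)| / (φ t) ^ 2 * ‖a t‖ + (φ t)⁻¹ * ‖b t‖ := by
      calc ‖h' t‖ ≤ ‖c' t • cmapL (a t)‖ + ‖c t • cmapL (b t)‖ := norm_add_le _ _
        _ = |(inner ℝ p (b t) : ℝ)| / (φ t) ^ 2 * ‖a t‖ + (φ t)⁻¹ * ‖b t‖ := by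
            rw [norm_smul, norm_smul, hcn, hc'n, norm_cmapL, norm_cmapL]
    have step2 : |(inner ℝ p (b t) : ℝ)| / (φ t) ^ 2 * ‖a t‖ + (φ t)⁻¹ * ‖b t‖
        ≤ (‖p‖ * ‖b t‖) / (‖p‖ * (1 - v₀)) ^ 2 * v₀ + (‖p‖ * (1 - v₀))⁻¹ * ‖b t‖ := by
      gcongr <;> first
        | positivity
        | exact abs_real_inner_le_norm p (b t)
        | exact hφlb t
        | exact hbd t
    have step3 : (‖p‖ * ‖b t‖) / (‖p‖ * (1 - v₀)) ^ 2 * v₀ + (‖p‖ * (1 - v₀))⁻¹ * ‖b t‖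
        = K / ‖p‖ * ‖b t‖ := by
      rw [hK]
      field_simp
    calc ‖h' t‖ ≤ _ := step1
      _ ≤ _ := step2
      _ = _ := step3
  calc ‖∫ t, g t • h' t‖ ≤ ∫ t, K / ‖p‖ * ‖b t‖ :=
        norm_integral_le_of_norm_le ((intb.norm).const_mul _)
          (Filter.Eventually.of_forall hbound)
    _ = K / ‖p‖ * ∫ t, ‖b t‖ := integral_const_mul _ _
    _ = K * (∫ t, ‖b t‖) / ‖p‖ := by ring
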